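/- Fix B ≥ 1 and 0 ≤ l < B. Let R_l be the (B−l) × 2B matrix with entries [R_l]_{n,i} = N_{nl} R_{nl}(r_i) for n = l+1,...,B and i = 0,...,2B−1, where r_i are the nodes of the Gaussian quadrature rule of order 2B for the weight e^{-r²} on [0,∞) with weights a_i. Then R_l · diag(a_i r_i²) · R_lᵀ = I_{B−l}, the identity matrix of size B−l. -/

import Mathlib

open MeasureTheory

/-- The generalized Laguerre polynomial `L_k^{(α)}`, via its closed-form expression. -/
noncomputable def glaguerre (α : ℝ) (k : ℕ) (t : ℝ) : ℝ :=
  ∑ j ∈ Finset.range (k + 1),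
    (-1 : ℝ) ^ j / (Nat.factorial j : ℝ) *
      (Real.Gamma ((k : ℝ) + α + 1) /
        (Real.Gamma ((j : ℝ) + α + 1) * (Nat.factorial (k - j) : ℝ))) * t ^ j

/-- The normalized radial SGL function `Q_{nl} = N_{nl} R_{nl}` (zero for `n ≤ l`). -/
noncomputable def Qrad (n l : ℕ) (r : ℝ) : ℝ :=
  if l < n then
    Real.sqrt (2 * (Nat.factorial (n - l - 1) : ℝ) / Real.Gamma ((n : ℝ) + 1/2)) *
      glaguerre ((l : ℝ) + 1/2) (n - l - 1) (r ^ 2) * r ^ l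
  else 0

/-!
Put `α = l + 1/2` and `t = r²`. Then `Q_{l+1+m}(r) Q_{l+1+n}(r) r²` equals
`N_m N_n L_m(t) L_n(t) r^{2l+2}`, and its integral against `e^{-r²}` is half the integral of
`L_m L_n` against `t^α e^{-t}`, under which `t^j` has moment `Γ(j + α + 1)`. Since
`Γ(j + k + α + 1) / Γ(k + α + 1)` is a rising factorial, a polynomial of degree `j` in `k`, the
moment of `t^j L_n(t)` is an `n`-th finite difference, which vanishes for `j < n`: this is
Laguerre orthogonality. The product `Q Q r²` has degree at most `4B - 2`, so the quadrature rule
reproduces these integrals, and they are the entries of `R_l diag(a_i r_i²) R_lᵀ`.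
-/

open Finset Polynomial
open scoped Nat

theorem sum_range_alternating_choose_mul_eval {R : Type*} [CommRing R] {P : R[X]} {n : ℕ}
    (hP : P.natDegree ≤ n) :
    ∑ k ∈ range (n + 1), (-1 : R) ^ k * n.choose k * P.eval (k : R)
      = (-1) ^ n * n ! * P.coeff n := by
  have hdiff : (fwdDiff 1)^[n] P.eval 0 = n ! * P.coeff n := by
    rcases hP.lt_or_eq with hlt | rfl
    · rw [fwdDiff_iter_eq_zero_of_degree_lt hlt, coeff_eq_zero_of_natDegree_lt hlt]
      simp
    · rw [fwdDiff_iter_degree_eq_factorial]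
      simp [mul_comm]
  rw [mul_assoc, ← hdiff, fwdDiff_iter_eq_sum_shift, Finset.mul_sum]
  refine sum_congr rfl fun k hk => ?_
  obtain ⟨d, rfl⟩ := Nat.exists_eq_add_of_le (mem_range_succ_iff.mp hk)
  simp only [Nat.add_sub_cancel_left, zsmul_eq_mul, Int.cast_mul, Int.cast_pow, Int.cast_neg,
    Int.cast_one, Int.cast_natCast, zero_add, nsmul_eq_mul, mul_one, pow_add]
  have hsq : (-1 : R) ^ d * (-1) ^ d = 1 := by rw [← pow_add, Even.neg_one_pow ⟨d, rfl⟩]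
  linear_combination -(-1 : R) ^ k * (k + d).choose k * P.eval (k : R) * hsq

theorem Real.Gamma_add_nat_eq_mul_ascPochhammer {x : ℝ} (hx : 0 < x) (n : ℕ) :
    Real.Gamma (x + n) = Real.Gamma x * (ascPochhammer ℝ n).eval x := by
  induction n with
  | zero => simp
  | succ n ih =>
    rw [Nat.cast_succ, ← add_assoc, Real.Gamma_add_one (by positivity), ih,
      ascPochhammer_succ_eval]
    ring

theorem coeff_ascPochhammer_comp_X_add_C {R : Type*} [CommRing R] [IsDomain R] (a : R)
    {j n : ℕ} (h : j ≤ n) :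
    ((ascPochhammer R j).comp (X + C a)).coeff n = if j = n then 1 else 0 := by
  have hmonic : ((ascPochhammer R j).comp (X + C a)).Monic :=
    (monic_ascPochhammer R j).comp_X_add_C a
  have hdeg : ((ascPochhammer R j).comp (X + C a)).natDegree = j := by
    rw [natDegree_comp, ascPochhammer_natDegree, natDegree_X_add_C, mul_one]
  split_ifs with hjn
  · subst hjn
    have := hmonic.coeff_natDegree
    rwa [hdeg] at this
  · exact coeff_eq_zero_of_natDegree_lt (hdeg.symm ▸ lt_of_le_of_ne h hjn)

theorem Gamma_nat_add_add_one_pos {α : ℝ} (hα : -1 < α) (k : ℕ) :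
    0 < Real.Gamma (k + α + 1) :=
  Real.Gamma_pos_of_pos (by linarith [(k.cast_nonneg : (0 : ℝ) ≤ k)])

/-- `∫₀^∞ P(t) t^α e^{-t} dt`, defined by its values `Γ(j + α + 1)` on monomials. -/
noncomputable def gammaMoment (α : ℝ) : ℝ[X] →ₗ[ℝ] ℝ :=
  lsum fun j => Real.Gamma (j + α + 1) • LinearMap.id

theorem gammaMoment_C_mul_X_pow (α c : ℝ) (j : ℕ) :
    gammaMoment α (C c * X ^ j) = c * Real.Gamma (j + α + 1) := by
  rw [gammaMoment, C_mul_X_pow_eq_monomial, lsum_apply, sum_monomial_index _ _ (by simp)]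
  simp [mul_comm]

noncomputable def laguerre (α : ℝ) (k : ℕ) : ℝ[X] :=
  ∑ j ∈ range (k + 1), C ((-1) ^ j / j ! *
      (Real.Gamma (k + α + 1) / (Real.Gamma (j + α + 1) * (k - j)!))) * X ^ j

theorem eval_laguerre (α : ℝ) (k : ℕ) (t : ℝ) :
    (laguerre α k).eval t = glaguerre α k t := by
  simp [laguerre, glaguerre, eval_finsetSum]

theorem natDegree_laguerre_le (α : ℝ) (k : ℕ) : (laguerre α k).natDegree ≤ k :=
  natDegree_sum_le_of_forall_le _ _ fun _ hj =>
    (natDegree_C_mul_X_pow_le _ _).trans (mem_range_succ_iff.mp hj)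

theorem coeff_laguerre (α : ℝ) {k n : ℕ} (hk : k ≤ n) :
    (laguerre α n).coeff k = (-1) ^ k / k ! *
      (Real.Gamma (n + α + 1) / (Real.Gamma (k + α + 1) * (n - k)!)) := by
  rw [laguerre, finsetSum_coeff]
  simp only [coeff_C_mul_X_pow, sum_ite_eq, mem_range_succ_iff, hk, if_true]

theorem coeff_laguerre_self {α : ℝ} (hα : -1 < α) (n : ℕ) :
    (laguerre α n).coeff n = (-1) ^ n / n ! := by
  rw [coeff_laguerre α le_rfl, Nat.sub_self, Nat.factorial_zero, Nat.cast_one, mul_one,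
    div_self (Gamma_nat_add_add_one_pos hα n).ne', mul_one]

theorem coeff_laguerre_mul_Gamma {α : ℝ} (hα : -1 < α) {k n : ℕ} (hk : k ≤ n) :
    (laguerre α n).coeff k * Real.Gamma (k + α + 1)
      = Real.Gamma (n + α + 1) / n ! * ((-1) ^ k * n.choose k) := by
  have hchoose : (n.choose k : ℝ) * k ! * (n - k)! = n ! := by
    exact_mod_cast Nat.choose_mul_factorial_mul_factorial hk
  rw [coeff_laguerre α hk, ← hchoose]
  field_simp [(Gamma_nat_add_add_one_pos hα k).ne', (Nat.choose_pos hk).ne']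

theorem gammaMoment_X_pow_mul_laguerre {α : ℝ} (hα : -1 < α) {j n : ℕ} (hj : j ≤ n) :
    gammaMoment α (X ^ j * laguerre α n)
      = if j = n then (-1) ^ n * Real.Gamma (n + α + 1) else 0 := by
  set P : ℝ[X] := (ascPochhammer ℝ j).comp (X + C (α + 1))
  have hterm : ∀ k ≤ n, gammaMoment α (X ^ j * (C ((laguerre α n).coeff k) * X ^ k))
      = Real.Gamma (n + α + 1) / n ! * ((-1) ^ k * n.choose k * P.eval (k : ℝ)) := by
    intro k hk
    rw [mul_left_comm, ← pow_add, gammaMoment_C_mul_X_pow, Nat.cast_add,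
      show (j + k : ℝ) + α + 1 = (k + α + 1) + j by ring,
      Real.Gamma_add_nat_eq_mul_ascPochhammer (by linarith [Gamma_nat_add_add_one_pos hα k]) j,
      ← mul_assoc, coeff_laguerre_mul_Gamma hα hk]
    simp only [P, eval_comp, eval_add, eval_X, eval_C, add_assoc]
    ring
  have hPdeg : P.natDegree ≤ n := by
    rw [natDegree_comp, ascPochhammer_natDegree, natDegree_X_add_C, mul_one]
    exact hj
  rw [as_sum_range_C_mul_X_pow' (laguerre α n) (Nat.lt_succ_of_le (natDegree_laguerre_le α n)),
    mul_sum, map_sum, sum_congr rfl fun k hk => hterm k (mem_range_succ_iff.mp hk), ← mul_sum,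
    sum_range_alternating_choose_mul_eval hPdeg, coeff_ascPochhammer_comp_X_add_C _ hj]
  split_ifs
  · field_simp
  · simp

theorem gammaMoment_mul_laguerre {α : ℝ} (hα : -1 < α) {P : ℝ[X]} {n : ℕ}
    (hP : P.natDegree ≤ n) :
    gammaMoment α (P * laguerre α n) = (-1) ^ n * Real.Gamma (n + α + 1) * P.coeff n := by
  conv_lhs => rw [as_sum_range_C_mul_X_pow' P (Nat.lt_succ_of_le hP)]
  simp only [sum_mul, map_sum, C_mul', smul_mul_assoc, map_smul, smul_eq_mul]
  rw [sum_congr rfl fun j hj => by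
    rw [gammaMoment_X_pow_mul_laguerre hα (mem_range_succ_iff.mp hj)]]
  simp [mul_comm]

theorem gammaMoment_laguerre_mul_laguerre {α : ℝ} (hα : -1 < α) {m n : ℕ} (hmn : m ≤ n) :
    gammaMoment α (laguerre α m * laguerre α n)
      = if m = n then Real.Gamma (n + α + 1) / n ! else 0 := by
  rw [gammaMoment_mul_laguerre hα ((natDegree_laguerre_le α m).trans hmn)]
  split_ifs with h
  · subst h
    rw [coeff_laguerre_self hα]
    field_simp
    rw [← pow_mul, Even.neg_one_pow ⟨m, by ring⟩, one_mul]
  · rw [coeff_eq_zero_of_natDegree_lt ((natDegree_laguerre_le α m).trans_lt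
      (lt_of_le_of_ne hmn h)), mul_zero]

theorem integral_Ioi_pow_mul_exp_neg_sq (d : ℕ) :
    ∫ x in Set.Ioi (0 : ℝ), x ^ d * Real.exp (-x ^ 2) = Real.Gamma ((d + 1) / 2) / 2 := by
  have h := integral_rpow_mul_exp_neg_rpow two_pos (neg_one_lt_zero.trans_le d.cast_nonneg)
  simp only [Real.rpow_natCast, Real.rpow_two] at h
  rw [h]
  ring

theorem integrableOn_Ioi_pow_mul_exp_neg_sq (d : ℕ) :
    IntegrableOn (fun x : ℝ => x ^ d * Real.exp (-x ^ 2)) (Set.Ioi 0) := by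
  have h := integrableOn_rpow_mul_exp_neg_rpow (neg_one_lt_zero.trans_le d.cast_nonneg) two_pos
  simpa only [Real.rpow_natCast, Real.rpow_two] using h

theorem integral_eval_sq_mul_pow_mul_exp_neg_sq (P : ℝ[X]) (l : ℕ) :
    ∫ x in Set.Ioi (0 : ℝ), P.eval (x ^ 2) * x ^ (2 * l + 2) * Real.exp (-x ^ 2)
      = gammaMoment (l + 1 / 2) P / 2 := by
  have hsum : ∀ x : ℝ, P.eval (x ^ 2) * x ^ (2 * l + 2) * Real.exp (-x ^ 2)
      = ∑ i ∈ range (P.natDegree + 1),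
          P.coeff i * (x ^ (2 * (i + l + 1)) * Real.exp (-x ^ 2)) := fun x => by
    rw [eval_eq_sum_range, sum_mul, sum_mul]
    exact sum_congr rfl fun i _ => by ring
  simp_rw [hsum]
  rw [integral_finsetSum _ fun i _ => (integrableOn_Ioi_pow_mul_exp_neg_sq _).const_mul _]
  conv_rhs => rw [as_sum_range_C_mul_X_pow P, map_sum, sum_div]
  refine sum_congr rfl fun i _ => ?_
  rw [integral_const_mul, integral_Ioi_pow_mul_exp_neg_sq, gammaMoment_C_mul_X_pow]
  push_cast
  ring_nf

noncomputable def radialPoly (l m : ℕ) : ℝ[X] :=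
  C √(2 * m ! / Real.Gamma (m + (l + 1 / 2) + 1)) * (laguerre (l + 1 / 2) m).comp (X ^ 2) *
    X ^ l

theorem eval_radialPoly (l m : ℕ) (x : ℝ) : (radialPoly l m).eval x = Qrad (l + 1 + m) l x := by
  have hsub : l + 1 + m - l - 1 = m := by omega
  have hcast : ((l + 1 + m : ℕ) : ℝ) + 1 / 2 = m + (l + 1 / 2) + 1 := by push_cast; ring
  rw [Qrad, if_pos (by omega), hsub, hcast]
  simp [radialPoly, eval_laguerre]

theorem natDegree_radialPoly_le (l m : ℕ) : (radialPoly l m).natDegree ≤ 2 * m + l := by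
  refine natDegree_mul_le.trans <|
    add_le_add ((natDegree_C_mul_le _ _).trans ?_) (natDegree_X_pow_le l)
  rw [natDegree_comp, natDegree_X_pow, mul_comm]
  exact Nat.mul_le_mul_left 2 (natDegree_laguerre_le _ m)

theorem integral_Qrad_mul_Qrad (l m n : ℕ) :
    ∫ x in Set.Ioi (0 : ℝ),
        Qrad (l + 1 + m) l x * Qrad (l + 1 + n) l x * x ^ 2 * Real.exp (-x ^ 2)
      = if m = n then 1 else 0 := by
  wlog hmn : m ≤ n generalizing m n
  · simp_rw [mul_comm (Qrad (l + 1 + m) l _), this n m (le_of_not_ge hmn), eq_comm]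
  have hα : (-1 : ℝ) < l + 1 / 2 := by linarith [(l.cast_nonneg : (0 : ℝ) ≤ l)]
  set N : ℕ → ℝ := fun k => √(2 * k ! / Real.Gamma (k + (l + 1 / 2) + 1))
  have hpoint : ∀ x : ℝ, Qrad (l + 1 + m) l x * Qrad (l + 1 + n) l x * x ^ 2 * Real.exp (-x ^ 2)
      = N m * N n * ((laguerre (l + 1 / 2) m * laguerre (l + 1 / 2) n).eval (x ^ 2)
          * x ^ (2 * l + 2) * Real.exp (-x ^ 2)) := fun x => by
    simp only [← eval_radialPoly, radialPoly, N, eval_mul, eval_C, eval_comp, eval_pow, eval_X]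
    ring
  simp_rw [hpoint]
  rw [integral_const_mul, integral_eval_sq_mul_pow_mul_exp_neg_sq,
    gammaMoment_laguerre_mul_laguerre hα hmn]
  split_ifs with h
  · subst h
    have hΓ := Gamma_nat_add_add_one_pos hα m
    rw [Real.mul_self_sqrt (by positivity)]
    field_simp
  · simp

theorem drt_matrix_identity_general (B l : ℕ) (hl : l < B)
    (r a : Fin (2 * B) → ℝ)
    (hquad : ∀ p : Polynomial ℝ, p.natDegree ≤ 4 * B - 1 →
      ∫ x in Set.Ioi (0:ℝ), p.eval x * Real.exp (-x ^ 2) = ∑ i, a i * p.eval (r i)) :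
    (Matrix.of fun (n : Fin (B - l)) (i : Fin (2 * B)) => Qrad (l + 1 + (n : ℕ)) l (r i)) *
        Matrix.diagonal (fun i => a i * (r i) ^ 2) *
        (Matrix.of fun (n : Fin (B - l)) (i : Fin (2 * B)) =>
          Qrad (l + 1 + (n : ℕ)) l (r i)).transpose
      = (1 : Matrix (Fin (B - l)) (Fin (B - l)) ℝ) := by
  ext m n
  set p := radialPoly l m * radialPoly l n * X ^ 2
  have hdeg : p.natDegree ≤ 4 * B - 1 :=
    calc p.natDegree ≤ (2 * m + l) + (2 * n + l) + 2 :=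
          natDegree_mul_le.trans <| add_le_add (natDegree_mul_le.trans <| add_le_add
            (natDegree_radialPoly_le l m) (natDegree_radialPoly_le l n)) (natDegree_X_pow_le 2)
      _ ≤ 4 * B - 1 := by omega
  have heval : ∀ x, p.eval x = Qrad (l + 1 + m) l x * Qrad (l + 1 + n) l x * x ^ 2 := by
    simp [p, eval_radialPoly]
  calc _ = ∑ i, a i * p.eval (r i) := by
        rw [Matrix.mul_apply]
        simp only [Matrix.mul_diagonal, Matrix.of_apply, Matrix.transpose_apply, heval]
        exact sum_congr rfl fun i _ => by ring
    _ = ∫ x in Set.Ioi (0 : ℝ), p.eval x * Real.exp (-x ^ 2) := (hquad p hdeg).symm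
    _ = _ := by
        simp_rw [heval]
        rw [integral_Qrad_mul_Qrad]
        simp [Matrix.one_apply, Fin.ext_iff]

theorem drt_matrix_identity (B l : ℕ) (hB : 1 ≤ B) (hl : l < B)
    (r a : Fin (2 * B) → ℝ)
    (hquad : ∀ p : Polynomial ℝ, p.natDegree ≤ 4 * B - 1 →
      ∫ x in Set.Ioi (0:ℝ), p.eval x * Real.exp (-x ^ 2) = ∑ i, a i * p.eval (r i)) :
    (Matrix.of fun (n : Fin (B - l)) (i : Fin (2 * B)) => Qrad (l + 1 + (n : ℕ)) l (r i)) *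
        Matrix.diagonal (fun i => a i * (r i) ^ 2) *
        (Matrix.of fun (n : Fin (B - l)) (i : Fin (2 * B)) =>
          Qrad (l + 1 + (n : ℕ)) l (r i)).transpose
      = (1 : Matrix (Fin (B - l)) (Fin (B - l)) ℝ) :=
  drt_matrix_identity_general B l hl r a hquad
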